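/- Let φ(t) = exp(−4∫₀¹ sin²(t v/2)·(dv/v)) for t ∈ ℝ. Then φ is Lebesgue-integrable on ℝ; more precisely, there is a constant C ≥ 0 such that |φ(t)| ≤ C·|t|^{−2} for all |t| ≥ 1. -/

import Mathlib

open MeasureTheory Filter Topology

-- pointwise bound helper
lemma phi_bound_aux {x v M : ℝ} (hv0 : 0 < v) (hv1 : v ≤ 1) (hx : |x| ≤ M) :
    ‖Real.sin (x * v / 2) ^ 2 / v‖ ≤ M ^ 2 / 4 := by
  have h1 : Real.sin (x * v / 2) ^ 2 ≤ (x * v / 2) ^ 2 := by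
    calc Real.sin (x * v / 2) ^ 2 = |Real.sin (x * v / 2)| ^ 2 := (sq_abs _).symm
    _ ≤ |x * v / 2| ^ 2 := by
        exact pow_le_pow_left₀ (abs_nonneg _) Real.abs_sin_le_abs 2
    _ = (x * v / 2) ^ 2 := sq_abs _
  have hx2 : x ^ 2 ≤ M ^ 2 := by
    have := abs_nonneg x
    nlinarith [sq_abs x]
  rw [Real.norm_eq_abs, abs_div, abs_of_nonneg (sq_nonneg _), abs_of_pos hv0,
    div_le_div_iff₀ hv0 (by norm_num : (0:ℝ) < 4)]
  nlinarith [sq_nonneg v, sq_nonneg x, mul_pos hv0 hv0]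

lemma phi_meas (x : ℝ) :
    AEStronglyMeasurable (fun v => Real.sin (x * v / 2) ^ 2 / v)
      (volume.restrict (Set.uIoc (0:ℝ) 1)) := by
  apply Measurable.aestronglyMeasurable
  exact ((Real.measurable_sin.comp ((measurable_id.const_mul x).div_const 2)).pow_const 2).div
    measurable_id

lemma phi_intInt (x : ℝ) :
    IntervalIntegrable (fun v => Real.sin (x * v / 2) ^ 2 / v) volume 0 1 := by
  rw [intervalIntegrable_iff]
  have hfin : IsFiniteMeasure (volume.restrict (Set.uIoc (0:ℝ) 1)) := by
    constructor
    rw [Measure.restrict_apply_univ]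
    simp [Set.uIoc_of_le zero_le_one]
  apply (integrable_const (|x| ^ 2 / 4)).mono' (phi_meas x)
  rw [ae_restrict_iff' measurableSet_uIoc]
  filter_upwards with v hv
  rw [Set.uIoc_of_le zero_le_one] at hv
  exact phi_bound_aux hv.1 hv.2 le_rfl


lemma J_continuous : Continuous (fun x : ℝ => ∫ v in (0:ℝ)..1, Real.sin (x * v / 2) ^ 2 / v) := by
  rw [continuous_iff_continuousAt]
  intro x₀
  apply intervalIntegral.continuousAt_of_dominated_interval
    (bound := fun _ => (|x₀| + 1) ^ 2 / 4)
  · exact Eventually.of_forall phi_meas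
  · have hev : ∀ᶠ x : ℝ in 𝓝 x₀, x ∈ Set.Ioo (x₀ - 1) (x₀ + 1) :=
      Ioo_mem_nhds (by linarith) (by linarith)
    filter_upwards [hev] with x hx
    filter_upwards with v hv
    rw [Set.uIoc_of_le zero_le_one] at hv
    have hxM : |x| ≤ |x₀| + 1 := by
      rw [abs_le]; obtain ⟨h1, h2⟩ := hx
      constructor <;> cases abs_cases x₀ <;> linarith
    exact phi_bound_aux hv.1 hv.2 hxM
  · exact intervalIntegrable_const
  · filter_upwards with v hv
    rw [Set.uIoc_of_le zero_le_one] at hv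
    have : Continuous fun x : ℝ => Real.sin (x * v / 2) ^ 2 / v := by fun_prop
    exact this.continuousAt

lemma key {t : ℝ} (ht : 1 ≤ t) :
    (Real.log t - 3) / 2 ≤ ∫ v in (0:ℝ)..1, Real.sin (t * v / 2) ^ 2 / v := by
  have ht0 : 0 < t := lt_of_lt_of_le one_pos ht
  have htne : t ≠ 0 := ht0.ne'
  set a := t⁻¹ with ha_def
  have ha0 : 0 < a := inv_pos.mpr ht0
  have ha1 : a ≤ 1 := by
    rw [ha_def]
    exact inv_le_one_of_one_le₀ ht
  have hsub1 : Set.uIcc (0:ℝ) a ⊆ Set.uIcc (0:ℝ) 1 := by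
    rw [Set.uIcc_of_le ha0.le, Set.uIcc_of_le zero_le_one]
    exact Set.Icc_subset_Icc le_rfl ha1
  have hsub2 : Set.uIcc a (1:ℝ) ⊆ Set.uIcc (0:ℝ) 1 := by
    rw [Set.uIcc_of_le ha1, Set.uIcc_of_le zero_le_one]
    exact Set.Icc_subset_Icc ha0.le le_rfl
  have hI1 := (phi_intInt t).mono_set hsub1
  have hI2 := (phi_intInt t).mono_set hsub2
  have hsplit : (∫ v in (0:ℝ)..1, Real.sin (t*v/2)^2/v)
      = (∫ v in (0:ℝ)..a, Real.sin (t*v/2)^2/v) + ∫ v in a..(1:ℝ), Real.sin (t*v/2)^2/v :=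
    (intervalIntegral.integral_add_adjacent_intervals hI1 hI2).symm
  have h0a : 0 ≤ ∫ v in (0:ℝ)..a, Real.sin (t*v/2)^2/v := by
    apply intervalIntegral.integral_nonneg ha0.le
    intro v hv
    rcases eq_or_lt_of_le hv.1 with h | h
    · simp [← h]
    · positivity
  -- positivity of points in [a, 1]
  have hpos : ∀ v ∈ Set.uIcc a (1:ℝ), 0 < v := by
    intro v hv
    rw [Set.uIcc_of_le ha1] at hv
    exact lt_of_lt_of_le ha0 hv.1
  -- rewrite the integrand on [a, 1]
  have hfg : Set.EqOn (fun v => Real.sin (t*v/2)^2/v)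
      (fun v => (1/2) * (1/v) - (1/2) * (Real.cos (t*v)/v)) (Set.uIcc a 1) := by
    intro v hv
    simp only
    rw [Real.sin_sq_eq_half_sub, show 2 * (t*v/2) = t*v by ring]
    ring
  have hc1 : ContinuousOn (fun v : ℝ => (1/2) * (1/v)) (Set.uIcc a 1) := by
    apply ContinuousOn.mul continuousOn_const
    exact ContinuousOn.div continuousOn_const continuousOn_id (fun v hv => (hpos v hv).ne')
  have hc2 : ContinuousOn (fun v : ℝ => (1/2) * (Real.cos (t*v)/v)) (Set.uIcc a 1) := by
    apply ContinuousOn.mul continuousOn_const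
    exact ContinuousOn.div (by fun_prop) continuousOn_id (fun v hv => (hpos v hv).ne')
  have h0mem : (0:ℝ) ∉ Set.uIcc a 1 := fun h => absurd (hpos 0 h) (lt_irrefl 0)
  have hlog : (∫ v in a..(1:ℝ), 1/v) = Real.log t := by
    rw [integral_one_div h0mem, ha_def, one_div, inv_inv]
  -- FTC for the cosine part
  have hder : ∀ v ∈ Set.uIcc a (1:ℝ), HasDerivAt (fun v => Real.sin (t*v)/(t*v))
      ((Real.cos (t*v) * t * (t*v) - Real.sin (t*v) * t)/(t*v)^2) v := by
    intro v hv
    have hv0 : 0 < v := hpos v hv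
    have h1 : HasDerivAt (fun v : ℝ => t*v) t v := by
      simpa using (hasDerivAt_id v).const_mul t
    have h2 : HasDerivAt (fun v : ℝ => Real.sin (t*v)) (Real.cos (t*v) * t) v :=
      (Real.hasDerivAt_sin (t*v)).comp v h1
    exact h2.div h1 (by positivity)
  have hDcont : ContinuousOn
      (fun v => (Real.cos (t*v) * t * (t*v) - Real.sin (t*v) * t)/(t*v)^2) (Set.uIcc a 1) := by
    apply ContinuousOn.div (by fun_prop) (by fun_prop)
    intro v hv
    have hv0 : 0 < v := hpos v hv
    positivity
  have hDint : IntervalIntegrable (fun v => (Real.cos (t*v) * t * (t*v) - Real.sin (t*v) * t)/(t*v)^2) volume a 1 := hDcont.intervalIntegrable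
  have hFTC : (∫ v in a..(1:ℝ), (Real.cos (t*v) * t * (t*v) - Real.sin (t*v) * t)/(t*v)^2)
      = Real.sin t / t - Real.sin 1 := by
    rw [intervalIntegral.integral_eq_sub_of_hasDerivAt hder hDint]
    rw [mul_one, ha_def, mul_inv_cancel₀ htne]
    norm_num
  -- the remainder term
  have hscont : ContinuousOn (fun v => Real.sin (t*v)/(t*v^2)) (Set.uIcc a 1) := by
    apply ContinuousOn.div (by fun_prop) (by fun_prop)
    intro v hv
    have hv0 : 0 < v := hpos v hv
    positivity
  have hsint : IntervalIntegrable (fun v => Real.sin (t*v)/(t*v^2)) volume a 1 := hscont.intervalIntegrable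
  have hcs : Set.EqOn (fun v => Real.cos (t*v)/v)
      (fun v => (Real.cos (t*v) * t * (t*v) - Real.sin (t*v) * t)/(t*v)^2
        + Real.sin (t*v)/(t*v^2)) (Set.uIcc a 1) := by
    intro v hv
    have hv0 : 0 < v := hpos v hv
    field_simp
    ring
  have hcos_eq : (∫ v in a..(1:ℝ), Real.cos (t*v)/v)
      = (Real.sin t / t - Real.sin 1) + ∫ v in a..(1:ℝ), Real.sin (t*v)/(t*v^2) := by
    rw [intervalIntegral.integral_congr hcs,
      intervalIntegral.integral_add hDint hsint, hFTC]
  -- bound on the remainder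
  have hinv2 : (∫ v in a..(1:ℝ), (v^2)⁻¹) = t - 1 := by
    have : (∫ v in a..(1:ℝ), (v:ℝ) ^ (-2:ℤ)) = ((1:ℝ) ^ ((-2:ℤ)+1) - a ^ ((-2:ℤ)+1)) / ((-2:ℤ)+1) := by
      apply integral_zpow
      right
      exact ⟨by norm_num, h0mem⟩
    rw [show (∫ v in a..(1:ℝ), (v^2)⁻¹) = ∫ v in a..(1:ℝ), (v:ℝ) ^ (-2:ℤ) by
      apply intervalIntegral.integral_congr
      intro v hv
      show (v^2)⁻¹ = v ^ (-2:ℤ)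
      rw [zpow_neg, zpow_two, pow_two], this, ha_def]
    norm_num
    ring
  have hgint : IntervalIntegrable (fun v : ℝ => t⁻¹ * (v^2)⁻¹) volume a 1 := by
    apply ContinuousOn.intervalIntegrable
    apply ContinuousOn.mul continuousOn_const
    apply ContinuousOn.inv₀ (by fun_prop)
    intro v hv
    have hv0 : 0 < v := hpos v hv
    positivity
  have hrem : |∫ v in a..(1:ℝ), Real.sin (t*v)/(t*v^2)| ≤ 1 := by
    have hb : ∀ᵐ v ∂(volume.restrict (Set.uIoc a (1:ℝ))),
        ‖Real.sin (t*v)/(t*v^2)‖ ≤ t⁻¹ * (v^2)⁻¹ := by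
      rw [ae_restrict_iff' measurableSet_uIoc]
      filter_upwards with v hv
      rw [Set.uIoc_of_le ha1] at hv
      have hv0 : 0 < v := lt_trans ha0 hv.1
      rw [Real.norm_eq_abs, abs_div, abs_of_pos (mul_pos ht0 (by positivity))]
      rw [div_le_iff₀ (mul_pos ht0 (by positivity))]
      calc |Real.sin (t*v)| ≤ 1 := abs_le.mpr ⟨Real.neg_one_le_sin _, Real.sin_le_one _⟩
      _ = t⁻¹ * (v^2)⁻¹ * (t*v^2) := by field_simp
    have := intervalIntegral.norm_integral_le_abs_of_norm_le hb hgint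
    rw [Real.norm_eq_abs] at this
    apply this.trans
    rw [intervalIntegral.integral_const_mul, hinv2]
    rw [abs_of_nonneg (mul_nonneg (inv_nonneg.mpr ht0.le) (by linarith))]
    rw [inv_mul_le_iff₀ ht0]
    linarith
  -- assemble the cos bound
  have hcosb : |∫ v in a..(1:ℝ), Real.cos (t*v)/v| ≤ 3 := by
    rw [hcos_eq]
    have h1 : |Real.sin t / t| ≤ 1 := by
      rw [abs_div, abs_of_pos ht0, div_le_one ht0]
      exact (abs_le.mpr ⟨Real.neg_one_le_sin t, Real.sin_le_one t⟩).trans ht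
    have h2 : |Real.sin 1| ≤ 1 := abs_le.mpr ⟨Real.neg_one_le_sin 1, Real.sin_le_one 1⟩
    calc |Real.sin t / t - Real.sin 1 + ∫ v in a..(1:ℝ), Real.sin (t*v)/(t*v^2)|
        ≤ |Real.sin t / t| + |Real.sin 1| + |∫ v in a..(1:ℝ), Real.sin (t*v)/(t*v^2)| := by
          apply (abs_add_le _ _).trans
          gcongr
          exact abs_sub _ _
    _ ≤ 3 := by linarith
  -- value of the [a,1] part
  have hmain : (Real.log t - 3)/2 ≤ ∫ v in a..(1:ℝ), Real.sin (t*v/2)^2/v := by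
    rw [intervalIntegral.integral_congr hfg,
      intervalIntegral.integral_sub (hc1.intervalIntegrable) (hc2.intervalIntegrable),
      intervalIntegral.integral_const_mul, intervalIntegral.integral_const_mul, hlog]
    have := abs_le.mp hcosb
    linarith [this.2]
  linarith [hsplit, h0a, hmain]

noncomputable section

/-- The limiting characteristic function of the squarefree random model:
`φ(t) = exp(−4 ∫₀¹ sin²(tv/2)/v dv)`. -/
def phiSquarefree (t : ℝ) : ℝ :=
  Real.exp (-4 * ∫ v in (0 : ℝ)..1, Real.sin (t * v / 2) ^ 2 / v)

lemma phi_even (t : ℝ) : phiSquarefree (-t) = phiSquarefree t := by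
  unfold phiSquarefree
  congr 2
  apply intervalIntegral.integral_congr
  intro v hv
  simp only
  rw [show -t*v/2 = -(t*v/2) by ring, Real.sin_neg, neg_sq]

lemma phi_cont : Continuous phiSquarefree :=
  Real.continuous_exp.comp (continuous_const.mul J_continuous)

lemma phi_le {t : ℝ} (ht : 1 ≤ t) : phiSquarefree t ≤ Real.exp 6 / t ^ 2 := by
  have ht0 : 0 < t := by linarith
  have hJ := key ht
  unfold phiSquarefree
  calc Real.exp (-4 * ∫ v in (0:ℝ)..1, Real.sin (t * v / 2) ^ 2 / v)
      ≤ Real.exp (6 + -(Real.log t + Real.log t)) := Real.exp_le_exp.mpr (by linarith)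
  _ = Real.exp 6 / t ^ 2 := by
      rw [Real.exp_add, Real.exp_neg, Real.exp_add, Real.exp_log ht0, pow_two, div_eq_mul_inv]

lemma phi_abs_le {t : ℝ} (ht : 1 ≤ |t|) : |phiSquarefree t| ≤ Real.exp 6 / t ^ 2 := by
  have hpos : 0 < phiSquarefree t := Real.exp_pos _
  rw [abs_of_pos hpos]
  rcases le_or_gt 1 t with h | h
  · exact phi_le h
  · have hneg : 1 ≤ -t := by
      rcases abs_cases t with ⟨h1, _⟩ | ⟨h1, _⟩ <;> linarith
    have := phi_le hneg
    rw [phi_even t, neg_sq] at this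
    exact this

/-- **Lemma 3.10 of Delbaen–Kowalski–Nikeghbali**: the function
`φ(t) = exp(−4∫₀¹ sin²(tv/2)/v dv)` is Lebesgue-integrable on ℝ; more precisely
there is a constant `C ≥ 0` with `|φ(t)| ≤ C·|t|⁻²` for all `|t| ≥ 1`. -/
theorem phiSquarefree_integrable :
    Integrable phiSquarefree ∧
      ∃ C : ℝ, 0 ≤ C ∧ ∀ t : ℝ, 1 ≤ |t| → |phiSquarefree t| ≤ C / t ^ 2 := by
  refine ⟨?_, Real.exp 6, (Real.exp_pos 6).le, fun t ht => phi_abs_le ht⟩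
  have h1 : IntegrableOn phiSquarefree (Set.Icc (-1:ℝ) 1) := phi_cont.integrableOn_Icc
  have hrpow : IntegrableOn (fun x : ℝ => x ^ (-2:ℝ)) (Set.Ioi 1) volume :=
    integrableOn_Ioi_rpow_of_lt (by norm_num) one_pos
  have h2 : IntegrableOn phiSquarefree (Set.Ioi 1) := by
    apply Integrable.mono' (hrpow.const_mul (Real.exp 6))
    · exact phi_cont.aestronglyMeasurable.restrict
    · rw [ae_restrict_iff' measurableSet_Ioi]
      filter_upwards with t ht
      have ht1 : (1:ℝ) ≤ t := le_of_lt ht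
      have hb := phi_abs_le (by rwa [abs_of_pos (by linarith)] : 1 ≤ |t|)
      rw [Real.norm_eq_abs]
      apply hb.trans
      have : t ^ (-2:ℝ) = (t ^ 2)⁻¹ := by
        rw [show (-2:ℝ) = -((2:ℕ):ℝ) by norm_num, Real.rpow_neg (by linarith),
          Real.rpow_natCast]
      rw [this, div_eq_mul_inv]
  have h3 : IntegrableOn phiSquarefree (Set.Iio (-1:ℝ)) := by
    have hmp := (MeasurePreserving.integrableOn_comp_preimage
      (Measure.measurePreserving_neg (volume : Measure ℝ))
      (Homeomorph.neg ℝ).measurableEmbedding).mpr h2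
    have hfun : (phiSquarefree ∘ (Neg.neg : ℝ → ℝ)) = phiSquarefree := funext phi_even
    have hset : ((Neg.neg : ℝ → ℝ) ⁻¹' Set.Ioi 1) = Set.Iio (-1:ℝ) := by
      ext x
      simp [lt_neg]
    rwa [hfun, hset] at hmp
  rw [← integrableOn_univ]
  have hsub : (Set.univ : Set ℝ) ⊆ Set.Iio (-1) ∪ (Set.Icc (-1) 1 ∪ Set.Ioi 1) := by
    intro x _
    simp only [Set.mem_union, Set.mem_Iio, Set.mem_Icc, Set.mem_Ioi]
    rcases lt_or_ge x (-1) with h | h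
    · exact Or.inl h
    rcases le_or_gt x 1 with h' | h'
    · exact Or.inr (Or.inl ⟨h, h'⟩)
    · exact Or.inr (Or.inr h')
  exact ((h3.union (h1.union h2)).mono_set hsub)

end
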